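/- Let (x_i, v_i)_{i=1}^N be a C¹ solution of the closed-loop flocking-with-steering system on [0,∞). If ∫₀^∞ d_β(t) dt < ∞, then the quantity ᾱ = inf over all i and all t ≥ 0 of α_i(t) = ξ_i(v̄_i(t) − v_i(t)) is strictly positive. -/

import Mathlib

/-!
Let `D(t)` be the velocity diameter. At a pair `(p, q)` realizing it, each `v̄_i` is a convex
combination of the velocities, so the steering terms `α_i (v̄_i - v_i)` of agents `p` and `q` do
not increase `‖v_p - v_q‖`: the upper right Dini derivative of `D` is at most `d_β` wherever
`D > 0`. A comparison argument gives `D(t) ≤ D(0) + ∫₀^∞ d_β =: R` for all `t ≥ 0`, so every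
deviation `v̄_i - v_i` stays in the closed ball of radius `R`, on which the continuous positive
gains `ξ_i` are bounded below by a positive constant.
-/

open MeasureTheory Set Filter

/-- Diameter (maximum pairwise distance) of a finite family of trajectories at time `t`. -/
noncomputable def pairDiam {N d : ℕ} (f : Fin N → ℝ → EuclideanSpace ℝ (Fin d)) (t : ℝ) : ℝ :=
  ⨆ p : Fin N × Fin N, ‖f p.1 t - f p.2 t‖

/-- Closed-loop influence coefficient `a_{ij}(t) = φ_{ij}(x(t); σ_i(v_i(t)))`. -/
noncomputable def aCL {N d : ℕ}
    (φ : Fin N → Fin N → (Fin N → EuclideanSpace ℝ (Fin d)) → EuclideanSpace ℝ (Fin d) → ℝ)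
    (σ : Fin N → EuclideanSpace ℝ (Fin d) → EuclideanSpace ℝ (Fin d))
    (x v : Fin N → ℝ → EuclideanSpace ℝ (Fin d)) (i j : Fin N) (t : ℝ) : ℝ :=
  φ i j (fun k => x k t) (σ i (v i t))

/-- Closed-loop averaged velocity `v̄_i(t) = ∑ j a_{ij}(t) v_j(t)`. -/
noncomputable def vbarCL {N d : ℕ}
    (φ : Fin N → Fin N → (Fin N → EuclideanSpace ℝ (Fin d)) → EuclideanSpace ℝ (Fin d) → ℝ)
    (σ : Fin N → EuclideanSpace ℝ (Fin d) → EuclideanSpace ℝ (Fin d))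
    (x v : Fin N → ℝ → EuclideanSpace ℝ (Fin d)) (i : Fin N) (t : ℝ) :
    EuclideanSpace ℝ (Fin d) :=
  ∑ j, aCL φ σ x v i j t • v j t

/-- Closed-loop gain `α_i(t) = ξ_i(v̄_i(t) - v_i(t))`. -/
noncomputable def alphaCL {N d : ℕ}
    (φ : Fin N → Fin N → (Fin N → EuclideanSpace ℝ (Fin d)) → EuclideanSpace ℝ (Fin d) → ℝ)
    (σ : Fin N → EuclideanSpace ℝ (Fin d) → EuclideanSpace ℝ (Fin d))
    (ξ : Fin N → EuclideanSpace ℝ (Fin d) → ℝ)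
    (x v : Fin N → ℝ → EuclideanSpace ℝ (Fin d)) (i : Fin N) (t : ℝ) : ℝ :=
  ξ i (vbarCL φ σ x v i t - v i t)

open Topology
open scoped RealInnerProductSpace

section PairDiam

variable {N d : ℕ}

theorem norm_sub_le_pairDiam (f : Fin N → ℝ → EuclideanSpace ℝ (Fin d)) (t : ℝ) (i j : Fin N) :
    ‖f i t - f j t‖ ≤ pairDiam f t :=
  le_ciSup (f := fun p : Fin N × Fin N => ‖f p.1 t - f p.2 t‖) (Finite.bddAbove_range _) (i, j)

theorem pairDiam_nonneg (f : Fin N → ℝ → EuclideanSpace ℝ (Fin d)) (t : ℝ) : 0 ≤ pairDiam f t :=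
  Real.iSup_nonneg fun _ => norm_nonneg _

theorem continuousOn_pairDiam [NeZero N] {f : Fin N → ℝ → EuclideanSpace ℝ (Fin d)} {s : Set ℝ}
    (hf : ∀ i, ContinuousOn (f i) s) : ContinuousOn (pairDiam f) s := by
  have : pairDiam f = fun t => Finset.univ.sup' Finset.univ_nonempty
      (fun p : Fin N × Fin N => ‖f p.1 t - f p.2 t‖) := by
    funext t
    exact (Finset.sup'_univ_eq_ciSup _).symm
  rw [this]
  exact ContinuousOn.finset_sup'_apply _ fun p _ => ((hf p.1).sub (hf p.2)).norm

end PairDiam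

theorem HasDerivWithinAt.norm_of_ne_zero {E : Type*} [NormedAddCommGroup E]
    [InnerProductSpace ℝ E] {g : ℝ → E} {g' : E} {s : Set ℝ} {t : ℝ}
    (hg : HasDerivWithinAt g g' s t) (h0 : g t ≠ 0) :
    HasDerivWithinAt (fun z => ‖g z‖) (⟪g t, g'⟫ / ‖g t‖) s t := by
  have h := hg.norm_sq.sqrt (by positivity)
  simp only [Real.sqrt_sq (norm_nonneg _)] at h
  convert h using 1
  field_simp

theorem eventually_slope_iSup_lt {ι : Type*} [Finite ι] [Nonempty ι] {f : ι → ℝ → ℝ} {t r : ℝ}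
    (hr : 0 ≤ r) (hf : ∀ k, ContinuousWithinAt (f k) (Ioi t) t)
    (hmax : ∀ k, f k t = ⨆ j, f j t → ∀ᶠ z in 𝓝[>] t, slope (f k) t z < r) :
    ∀ᶠ z in 𝓝[>] t, slope (fun z => ⨆ k, f k z) t z < r := by
  have hk : ∀ k, ∀ᶠ z in 𝓝[>] t, f k z < (⨆ j, f j t) + r * (z - t) := by
    intro k
    by_cases hkt : f k t = ⨆ j, f j t
    · filter_upwards [hmax k hkt, self_mem_nhdsWithin] with z hz hzt
      rw [slope_def_field, div_lt_iff₀ (sub_pos.2 hzt)] at hz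
      linarith
    · have hlt : f k t < ⨆ j, f j t :=
        lt_of_le_of_ne (le_ciSup (f := fun j => f j t) (Finite.bddAbove_range _) k) hkt
      filter_upwards [(hf k).eventually_lt_const hlt, self_mem_nhdsWithin] with z hz hzt
      nlinarith [mul_nonneg hr (sub_pos.2 hzt).le]
  filter_upwards [eventually_all.2 hk, self_mem_nhdsWithin] with z hz hzt
  obtain ⟨k, hkz⟩ := exists_eq_ciSup_of_finite (f := fun j => f j z)
  rw [slope_def_field, div_lt_iff₀ (sub_pos.2 hzt), ← hkz]
  linarith [hz k]

section ConvexCombination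

variable {E : Type*} [NormedAddCommGroup E] [InnerProductSpace ℝ E] {ι : Type*}

theorem inner_le_inner_of_forall_norm_sub_le {y : ι → E} {p q : ι}
    (hmax : ∀ k, ‖y k - y q‖ ≤ ‖y p - y q‖) (k : ι) :
    ⟪y p - y q, y k⟫ ≤ ⟪y p - y q, y p⟫ := by
  have h : ⟪y p - y q, y k - y q⟫ ≤ ⟪y p - y q, y p - y q⟫ := by
    rw [real_inner_self_eq_norm_mul_norm]
    exact (real_inner_le_norm _ _).trans (mul_le_mul_of_nonneg_left (hmax k) (norm_nonneg _))
  rw [inner_sub_right, inner_sub_right] at h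
  linarith

theorem inner_sum_smul_sub_nonpos [Fintype ι] {a : ι → ℝ} (ha : ∀ j, 0 ≤ a j)
    (ha1 : ∑ j, a j = 1) {y : ι → E} {w : E} {p : ι} (h : ∀ k, ⟪w, y k⟫ ≤ ⟪w, y p⟫) :
    ⟪w, ∑ j, a j • y j - y p⟫ ≤ 0 := by
  have hmem := (convex_halfSpace_le (innerₛₗ ℝ w).isLinear ⟪w, y p⟫).sum_mem
    (fun j _ => ha j) ha1 (fun k _ => h k)
  rw [inner_sub_right, sub_nonpos]
  exact hmem

theorem norm_sum_smul_sub_le [Fintype ι] {a : ι → ℝ} (ha : ∀ j, 0 ≤ a j) (ha1 : ∑ j, a j = 1)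
    {y : ι → E} {p : ι} {R : ℝ} (h : ∀ k, ‖y k - y p‖ ≤ R) :
    ‖∑ j, a j • y j - y p‖ ≤ R :=
  mem_closedBall_iff_norm.1 <| (convex_closedBall (y p) R).sum_mem (fun j _ => ha j) ha1
    fun k _ => mem_closedBall_iff_norm.2 (h k)

/-- The steering terms of a pair realizing the diameter never increase its distance. -/
theorem inner_sub_steering_le [Fintype ι] {y b : ι → E} {c : ι → ℝ} {a : ι → ι → ℝ}
    (ha : ∀ i j, 0 ≤ a i j) (ha1 : ∀ i, ∑ j, a i j = 1) {p q : ι} (hcp : 0 ≤ c p) (hcq : 0 ≤ c q)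
    (hmax : ∀ j k, ‖y j - y k‖ ≤ ‖y p - y q‖) :
    ⟪y p - y q, (c p • (∑ j, a p j • y j - y p) + b p) - (c q • (∑ j, a q j • y j - y q) + b q)⟫
      ≤ ⟪y p - y q, b p - b q⟫ := by
  have hp : ⟪y p - y q, ∑ j, a p j • y j - y p⟫ ≤ 0 :=
    inner_sum_smul_sub_nonpos (ha p) (ha1 p)
      (inner_le_inner_of_forall_norm_sub_le fun k => hmax k q)
  have hq : ⟪y q - y p, ∑ j, a q j • y j - y q⟫ ≤ 0 :=
    inner_sum_smul_sub_nonpos (ha q) (ha1 q)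
      (inner_le_inner_of_forall_norm_sub_le fun k => (norm_sub_rev (y q) (y p)) ▸ hmax k p)
  rw [← neg_sub, inner_neg_left] at hq
  simp only [inner_sub_right, inner_add_right, real_inner_smul_right] at hp hq ⊢
  nlinarith [mul_nonpos_of_nonneg_of_nonpos hcp hp, mul_nonneg hcq (neg_nonneg.2 hq)]

end ConvexCombination

section DiameterSlope

variable {N d : ℕ} [NeZero N]

theorem eventually_slope_pairDiam_lt_of_pairDiam_deriv_lt
    {v W : Fin N → ℝ → EuclideanSpace ℝ (Fin d)} {t r : ℝ}
    (hv : ∀ i, HasDerivWithinAt (v i) (W i t) (Ioi t) t) (hr : pairDiam W t < r) :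
    ∀ᶠ z in 𝓝[>] t, slope (pairDiam v) t z < r := by
  refine eventually_slope_iSup_lt ((pairDiam_nonneg W t).trans hr.le)
    (fun p => ((hv p.1).sub (hv p.2)).continuousWithinAt.norm) fun p _ => ?_
  filter_upwards [((hv p.1).sub (hv p.2)).limsup_slope_norm_le
    ((norm_sub_le_pairDiam W t p.1 p.2).trans_lt hr), self_mem_nhdsWithin] with z hz hzt
  rw [Real.norm_eq_abs, abs_of_pos (sub_pos.2 hzt)] at hz
  rw [slope_def_field, div_eq_inv_mul]
  exact hz

theorem eventually_slope_pairDiam_lt_of_pairDiam_forcing_lt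
    {v β : Fin N → ℝ → EuclideanSpace ℝ (Fin d)} {c : Fin N → ℝ → ℝ}
    {a : Fin N → Fin N → ℝ → ℝ} {t r : ℝ} (hc : ∀ i, 0 ≤ c i t) (ha : ∀ i j, 0 ≤ a i j t)
    (ha1 : ∀ i, ∑ j, a i j t = 1)
    (hv : ∀ i, HasDerivWithinAt (v i) (c i t • (∑ j, a i j t • v j t - v i t) + β i t) (Ioi t) t)
    (hD : 0 < pairDiam v t) (hr : pairDiam β t < r) :
    ∀ᶠ z in 𝓝[>] t, slope (pairDiam v) t z < r := by
  refine eventually_slope_iSup_lt ((pairDiam_nonneg β t).trans hr.le)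
    (fun p => ((hv p.1).sub (hv p.2)).continuousWithinAt.norm) ?_
  rintro ⟨p, q⟩ hpq
  change ‖v p t - v q t‖ = pairDiam v t at hpq
  have hpos : 0 < ‖v p t - v q t‖ := hpq ▸ hD
  have hmax : ∀ j k, ‖v j t - v k t‖ ≤ ‖v p t - v q t‖ :=
    fun j k => hpq ▸ norm_sub_le_pairDiam v t j k
  have hderiv : HasDerivWithinAt (fun z => ‖v p z - v q z‖)
      (⟪v p t - v q t, (c p t • (∑ j, a p j t • v j t - v p t) + β p t)
        - (c q t • (∑ j, a q j t • v j t - v q t) + β q t)⟫ / ‖v p t - v q t‖) (Ioi t) t :=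
    ((hv p).sub (hv q)).norm_of_ne_zero (norm_pos_iff.1 hpos)
  refine hderiv.limsup_slope_le' (lt_irrefl t) ((div_lt_iff₀ hpos).2 ?_)
  calc _ ≤ ⟪v p t - v q t, β p t - β q t⟫ :=
        inner_sub_steering_le (y := (v · t)) (b := (β · t)) (c := (c · t))
          (a := (a · · t)) ha ha1 (hc p) (hc q) hmax
    _ ≤ ‖v p t - v q t‖ * ‖β p t - β q t‖ := real_inner_le_norm _ _
    _ < r * ‖v p t - v q t‖ := by
        rw [mul_comm]
        exact mul_lt_mul_of_pos_right ((norm_sub_le_pairDiam β t p q).trans_lt hr) hpos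

end DiameterSlope

/-- Comparison with `B s = D 0 + δ * (1 + s) + ∫₀ˢ h`; the Dini derivative of `D` must be finite
everywhere, not only at the contact points `D s = B s`, for this comparison to apply. -/
theorem le_add_integral_of_liminf_slope_le {D h : ℝ → ℝ} (hD : ContinuousOn D (Ici 0))
    (hh : ContinuousOn h (Ici 0)) (hh0 : ∀ t ∈ Ici (0:ℝ), 0 ≤ h t)
    (hfin : ∀ t ∈ Ici (0:ℝ), ∃ M, ∀ r, M < r → ∃ᶠ z in 𝓝[>] t, slope D t z < r)
    (hdini : ∀ t ∈ Ici (0:ℝ), D 0 < D t → ∀ r, h t < r → ∃ᶠ z in 𝓝[>] t, slope D t z < r)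
    {t : ℝ} (ht : 0 ≤ t) : D t ≤ D 0 + ∫ s in (0:ℝ)..t, h s := by
  choose! M hM using hfin
  set h' : ℝ → ℝ := fun s => h (max s 0)
  have hh' : Continuous h' :=
    hh.comp_continuous (continuous_id.max continuous_const) fun s => le_max_right s 0
  have hint : ∀ s, 0 ≤ s → ∫ u in (0:ℝ)..s, h' u = ∫ u in (0:ℝ)..s, h u := fun s hs =>
    intervalIntegral.integral_congr fun u hu => by
      rw [uIcc_of_le hs] at hu
      simp only [h', max_eq_left hu.1]
  refine le_of_forall_pos_le_add fun ε hε => ?_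
  set δ := ε / (1 + t)
  have hδ : 0 < δ := div_pos hε (by linarith)
  set B : ℝ → ℝ := fun s => D 0 + δ * (1 + s) + ∫ u in (0:ℝ)..s, h' u
  have hB : ∀ s, HasDerivAt B (δ + h' s) s := fun s =>
    (((((hasDerivAt_id s).const_add 1).const_mul δ).const_add (D 0)).add
      (hh'.integral_hasStrictDerivAt 0 s).hasDerivAt).congr_deriv (by simp)
  have hcontact : ∀ s ∈ Ico 0 t, D s = B s → D 0 < D s := fun s hs hDB => by
    have : 0 ≤ ∫ u in (0:ℝ)..s, h' u :=
      intervalIntegral.integral_nonneg hs.1 fun u _ => hh0 (max u 0) (le_max_right u 0)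
    rw [hDB]
    show D 0 < D 0 + δ * (1 + s) + _
    nlinarith [mul_nonneg hδ.le hs.1]
  have hcomp := image_le_of_liminf_slope_right_lt_deriv_boundary
    (f' := fun s => if D s = B s then h s else M s) (hD.mono Icc_subset_Ici_self)
    (fun s hs r hr => by
      split_ifs at hr with hDB
      · exact hdini s hs.1 (hcontact s hs hDB) r hr
      · exact hM s hs.1 r hr)
    (by simp [B, hδ.le]) hB
    (fun s hs hDB => by simp [hDB, h', max_eq_left hs.1, hδ]) (right_mem_Icc.2 ht)
  have hδt : δ * (1 + t) = ε := div_mul_cancel₀ ε (by linarith)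
  simp only [B, hint t ht, hδt] at hcomp
  linarith

theorem intervalIntegral_le_setIntegral_Ici {f : ℝ → ℝ} (hf : ContinuousOn f (Ici 0))
    (hf0 : ∀ t ∈ Ici (0:ℝ), 0 ≤ f t) (hfin : ∫⁻ t in Ici (0:ℝ), ENNReal.ofReal (f t) < ⊤)
    {t : ℝ} (ht : 0 ≤ t) : ∫ s in (0:ℝ)..t, f s ≤ ∫ s in Ici (0:ℝ), f s := by
  have hnonneg : 0 ≤ᵐ[volume.restrict (Ici (0:ℝ))] f :=
    ae_restrict_of_forall_mem measurableSet_Ici hf0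
  have hint : IntegrableOn f (Ici 0) :=
    ⟨hf.aestronglyMeasurable measurableSet_Ici, (hasFiniteIntegral_iff_ofReal hnonneg).2 hfin⟩
  rw [intervalIntegral.integral_of_le ht]
  exact setIntegral_mono_set hint hnonneg
    (LE.le.eventuallyLE (Ioc_subset_Icc_self.trans Icc_subset_Ici_self))

theorem pairDiam_le_add_integral {N d : ℕ} [NeZero N]
    {v β : Fin N → ℝ → EuclideanSpace ℝ (Fin d)} {c : Fin N → ℝ → ℝ} {a : Fin N → Fin N → ℝ → ℝ}
    (hc : ∀ i, ∀ t ∈ Ici (0:ℝ), 0 ≤ c i t) (ha : ∀ i j, ∀ t ∈ Ici (0:ℝ), 0 ≤ a i j t)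
    (ha1 : ∀ i, ∀ t ∈ Ici (0:ℝ), ∑ j, a i j t = 1) (hβ : ∀ i, ContinuousOn (β i) (Ici 0))
    (hv : ∀ i, ∀ t ∈ Ici (0:ℝ),
      HasDerivWithinAt (v i) (c i t • (∑ j, a i j t • v j t - v i t) + β i t) (Ici 0) t)
    {t : ℝ} (ht : 0 ≤ t) : pairDiam v t ≤ pairDiam v 0 + ∫ s in (0:ℝ)..t, pairDiam β s := by
  have hv' : ∀ t ∈ Ici (0:ℝ), ∀ i, HasDerivWithinAt (v i)
      (c i t • (∑ j, a i j t • v j t - v i t) + β i t) (Ioi t) t :=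
    fun t ht i => ((hv i t ht).mono (Ici_subset_Ici.2 ht)).Ioi_of_Ici
  refine le_add_integral_of_liminf_slope_le
    (continuousOn_pairDiam fun i t ht => (hv i t ht).continuousWithinAt)
    (continuousOn_pairDiam hβ) (fun t _ => pairDiam_nonneg β t)
    (fun t ht => ⟨_, fun r hr =>
      (eventually_slope_pairDiam_lt_of_pairDiam_deriv_lt
        (W := fun i s => c i s • (∑ j, a i j s • v j s - v i s) + β i s) (hv' t ht)
        hr).frequently⟩)
    (fun t ht hlt r hr => (eventually_slope_pairDiam_lt_of_pairDiam_forcing_lt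
      (fun i => hc i t ht) (fun i j => ha i j t ht) (fun i => ha1 i t ht) (hv' t ht)
      ((pairDiam_nonneg v 0).trans_lt hlt) hr).frequently) ht

theorem exists_pos_le_of_norm_le {ι E : Type*} [TopologicalSpace ι] [DiscreteTopology ι]
    [Finite ι] [NormedAddCommGroup E] [ProperSpace E] {f : ι → E → ℝ}
    (hf : ∀ i, Continuous (f i)) (hpos : ∀ i u, 0 < f i u) (R : ℝ) :
    ∃ m > 0, ∀ i u, ‖u‖ ≤ R → m ≤ f i u := by
  obtain ⟨m, hm, hmle⟩ :=
    (isCompact_univ.prod (isCompact_closedBall (0 : E) R)).exists_forall_le'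
      (continuous_prod_of_discrete_left.2 hf).continuousOn fun p _ => hpos p.1 p.2
  exact ⟨m, hm, fun i u hu => hmle (i, u) ⟨mem_univ i, mem_closedBall_zero_iff.2 hu⟩⟩

theorem closed_loop_gain_infimum_positive_general
    (N d : ℕ) (hN : 2 ≤ N)
    (φ : Fin N → Fin N → (Fin N → EuclideanSpace ℝ (Fin d)) → EuclideanSpace ℝ (Fin d) → ℝ)
    (σ : Fin N → EuclideanSpace ℝ (Fin d) → EuclideanSpace ℝ (Fin d))
    (ξ : Fin N → EuclideanSpace ℝ (Fin d) → ℝ)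
    (x v β : Fin N → ℝ → EuclideanSpace ℝ (Fin d))
    (hφ_pos : ∀ i j X u, 0 < φ i j X u)
    (hφ_sum : ∀ i X u, ∑ j, φ i j X u = 1)
    (hξ_smooth : ∀ i, ContDiff ℝ 1 (ξ i))
    (hξ_pos : ∀ i u, 0 < ξ i u)
    (hβ_cont : ∀ i, ContinuousOn (β i) (Ici 0))
    (hv : ∀ i, ∀ t ∈ Ici (0:ℝ),
      HasDerivWithinAt (v i)
        (alphaCL φ σ ξ x v i t • (vbarCL φ σ x v i t - v i t) + β i t) (Ici 0) t)
    (hβ_int : ∫⁻ t in Ici (0:ℝ), ENNReal.ofReal (pairDiam β t) < ⊤) :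
    0 < ⨅ p : Fin N × (Ici (0:ℝ)), alphaCL φ σ ξ x v p.1 (p.2 : ℝ) := by
  have : NeZero N := ⟨by omega⟩
  set R := pairDiam v 0 + ∫ s in Ici (0:ℝ), pairDiam β s
  have hdiam : ∀ t ∈ Ici (0:ℝ), pairDiam v t ≤ R := fun t ht =>
    (pairDiam_le_add_integral (c := alphaCL φ σ ξ x v) (a := aCL φ σ x v)
      (fun i t _ => (hξ_pos i _).le) (fun i j t _ => (hφ_pos i j _ _).le)
      (fun i t _ => hφ_sum i _ _) hβ_cont hv ht).trans <| add_le_add_right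
        (intervalIntegral_le_setIntegral_Ici (continuousOn_pairDiam hβ_cont)
          (fun t _ => pairDiam_nonneg β t) hβ_int ht) _
  have hdev : ∀ i, ∀ t ∈ Ici (0:ℝ), ‖vbarCL φ σ x v i t - v i t‖ ≤ R := fun i t ht =>
    norm_sum_smul_sub_le (fun j => (hφ_pos i j _ _).le) (hφ_sum i _ _)
      fun k => (norm_sub_le_pairDiam v t k i).trans (hdiam t ht)
  obtain ⟨m, hm, hmle⟩ := exists_pos_le_of_norm_le (fun i => (hξ_smooth i).continuous) hξ_pos R
  have : Nonempty (Ici (0:ℝ)) := ⟨⟨0, self_mem_Ici⟩⟩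
  exact hm.trans_le (le_ciInf fun ⟨i, t, ht⟩ => hmle i _ (hdev i t ht))

/-- For a `C¹` solution of the closed-loop flocking-with-steering system on
`[0,∞)`, if `∫₀^∞ d_β(t) dt < ∞` then `ᾱ = inf_{i, t ≥ 0} α_i(t) > 0`. -/
theorem closed_loop_gain_infimum_positive
    (N d : ℕ) (hN : 2 ≤ N)
    (φ : Fin N → Fin N → (Fin N → EuclideanSpace ℝ (Fin d)) → EuclideanSpace ℝ (Fin d) → ℝ)
    (σ : Fin N → EuclideanSpace ℝ (Fin d) → EuclideanSpace ℝ (Fin d))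
    (ξ : Fin N → EuclideanSpace ℝ (Fin d) → ℝ)
    (x v β : Fin N → ℝ → EuclideanSpace ℝ (Fin d))
    (hφ_smooth : ∀ i j, ContDiff ℝ 1
      (fun p : (Fin N → EuclideanSpace ℝ (Fin d)) × EuclideanSpace ℝ (Fin d) => φ i j p.1 p.2))
    (hφ_pos : ∀ i j X u, 0 < φ i j X u)
    (hφ_sum : ∀ i X u, ∑ j, φ i j X u = 1)
    (hφ_shift : ∀ i j X (y : EuclideanSpace ℝ (Fin d)) u, φ i j (fun k => X k + y) u = φ i j X u)
    (hσ_smooth : ∀ i, ContDiff ℝ 1 (σ i))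
    (hσ_ball : ∀ i u, ‖σ i u‖ ≤ 1)
    (hξ_smooth : ∀ i, ContDiff ℝ 1 (ξ i))
    (hξ_pos : ∀ i u, 0 < ξ i u)
    (hξ_bound : ∃ A > 0, ∀ i (u : EuclideanSpace ℝ (Fin d)), u ≠ 0 → ξ i u ≤ A / ‖u‖)
    (hβ_cont : ∀ i, ContinuousOn (β i) (Ici 0))
    (hx : ∀ i, ∀ t ∈ Ici (0:ℝ), HasDerivWithinAt (x i) (v i t) (Ici 0) t)
    (hv : ∀ i, ∀ t ∈ Ici (0:ℝ),
      HasDerivWithinAt (v i)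
        (alphaCL φ σ ξ x v i t • (vbarCL φ σ x v i t - v i t) + β i t) (Ici 0) t)
    (hβ_int : ∫⁻ t in Ici (0:ℝ), ENNReal.ofReal (pairDiam β t) < ⊤) :
    0 < ⨅ p : Fin N × (Ici (0:ℝ)), alphaCL φ σ ξ x v p.1 (p.2 : ℝ) :=
  closed_loop_gain_infimum_positive_general N d hN φ σ ξ x v β hφ_pos hφ_sum hξ_smooth hξ_pos
    hβ_cont hv hβ_int
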